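/- (Inequality (eqn:3).) Let Ω be a finite multiset of s index pairs from [m]×[n], let A_r ∈ ℝ^{m×n} satisfy P_T(A_r) = A_r, and let B ∈ ℝ^{m×n} be arbitrary. Suppose Y ∈ ℝ^{m×n} satisfies (i) ‖P_T(Y) − UVᵀ‖_F ≤ √(r/(2n)), (ii) ‖P_{T⊥}(Y)‖ ≤ 1/2, and (iii) |⟨Y, M⟩| ≤ √(3 m n r log(2n)/(8s)) · √(⟨R_Ω(M), M⟩) for all M ∈ ℝ^{m×n}. Then ⟨B − A_r, UVᵀ⟩ ≥ −√(r/(2n))·‖P_T(A_r − B)‖_F − (1/2)·‖P_{T⊥}(B)‖_* − √(3 m n r log(2n)/(8s)) · √(⟨R_Ω(A_r − B), A_r − B⟩). -/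

import Mathlib

/-!
Write `Δ = A_r − B`. Since `P_T + P_{T⊥}` is the identity and the two projections are orthogonal
and self-adjoint, `⟨Δ, UVᵀ − Y⟩` splits into a `T`-part `⟨P_T Δ, UVᵀ − P_T Y⟩` and a `T⊥`-part
`⟨P_{T⊥} B, P_{T⊥} Y⟩` (because `P_{T⊥} A_r = 0` and `P_{T⊥}(UVᵀ) = 0`). The first is bounded by
Cauchy–Schwarz and (i), the second by the duality `|⟨Z, X⟩| ≤ ‖Z‖ ‖X‖_*` and (ii), and the remaining
term `⟨Δ, Y⟩` by (iii).
-/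

open scoped BigOperators
open Matrix
open MeasureTheory

namespace MC

variable {m n r s : ℕ}

/-- Trace inner product `⟨X,Y⟩ = trace(Xᵀ Y)`. -/
def ip (A B : Matrix (Fin m) (Fin n) ℝ) : ℝ := ∑ i, ∑ j, A i j * B i j

/-- Frobenius norm. -/
noncomputable def fro (A : Matrix (Fin m) (Fin n) ℝ) : ℝ := Real.sqrt (ip A A)

/-- Largest absolute value of an entry. -/
noncomputable def infNorm (A : Matrix (Fin m) (Fin n) ℝ) : ℝ := ⨆ i, ⨆ j, |A i j|

/-- Nuclear norm: sum of singular values. -/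
noncomputable def nuclearNorm (A : Matrix (Fin m) (Fin n) ℝ) : ℝ :=
  ∑ j, Real.sqrt ((show (Aᵀ * A).IsHermitian by
    rw [← Matrix.conjTranspose_eq_transpose_of_trivial]; exact Matrix.isHermitian_conjTranspose_mul_self A).eigenvalues j)

/-- Spectral norm: largest singular value. -/
noncomputable def specNorm (A : Matrix (Fin m) (Fin n) ℝ) : ℝ :=
  ⨆ j, Real.sqrt ((show (Aᵀ * A).IsHermitian by
    rw [← Matrix.conjTranspose_eq_transpose_of_trivial]; exact Matrix.isHermitian_conjTranspose_mul_self A).eigenvalues j)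

/-- Sampling operator for a multiset of index pairs. -/
def RΩ (Ω : Multiset (Fin m × Fin n)) (Z : Matrix (Fin m) (Fin n) ℝ) :
    Matrix (Fin m) (Fin n) ℝ :=
  Matrix.of fun i j => (Ω.count (i, j)) * Z i j

def PT (U : Matrix (Fin m) (Fin r) ℝ) (V : Matrix (Fin n) (Fin r) ℝ)
    (Z : Matrix (Fin m) (Fin n) ℝ) : Matrix (Fin m) (Fin n) ℝ :=
  U * Uᵀ * Z + Z * (V * Vᵀ) - U * Uᵀ * Z * (V * Vᵀ)

def PTperp (U : Matrix (Fin m) (Fin r) ℝ) (V : Matrix (Fin n) (Fin r) ℝ)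
    (Z : Matrix (Fin m) (Fin n) ℝ) : Matrix (Fin m) (Fin n) ℝ :=
  (1 - U * Uᵀ) * Z * (1 - V * Vᵀ)

/-- Objective of nuclear-norm regularized least squares. -/
noncomputable def obj (Ω : Multiset (Fin m × Fin n)) (A : Matrix (Fin m) (Fin n) ℝ)
    (lam : ℝ) (B : Matrix (Fin m) (Fin n) ℝ) : ℝ :=
  (1 / 2) * (Ω.map fun p => (B p.1 p.2 - A p.1 p.2) ^ 2).sum + lam * nuclearNorm B

/-- Uniform probability measure on index pairs. -/
noncomputable def unifPair (m n : ℕ) : Measure (Fin m × Fin n) :=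
  (Fintype.card (Fin m × Fin n) : ENNReal)⁻¹ • Measure.count

/-- Law of `s` i.i.d. uniform index pairs. -/
noncomputable def sampleMeasure (m n s : ℕ) : Measure (Fin s → Fin m × Fin n) :=
  Measure.pi fun _ => unifPair m n

/-- The multiset of sampled indices. -/
def toMS (ω : Fin s → Fin m × Fin n) : Multiset (Fin m × Fin n) :=
  Multiset.map ω Finset.univ.val

end MC

namespace Matrix

variable {ι κ : Type*} [Fintype ι]

theorem abs_dotProduct_le_sqrt_mul_sqrt (v w : ι → ℝ) :
    |v ⬝ᵥ w| ≤ √(v ⬝ᵥ v) * √(w ⬝ᵥ w) := by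
  have hv : 0 ≤ v ⬝ᵥ v := Finset.sum_nonneg fun i _ => mul_self_nonneg (v i)
  rw [← Real.sqrt_mul hv]
  apply Real.abs_le_sqrt
  simpa only [dotProduct, sq] using Finset.sum_mul_sq_le_sq_mul_sq Finset.univ v w

theorem transpose_apply_dotProduct_self {R : Type*} [CommSemiring R] (M : Matrix ι κ R) (j : κ) :
    Mᵀ j ⬝ᵥ Mᵀ j = (Mᵀ * M) j j :=
  rfl

theorem dotProduct_mul_mul_transpose_mulVec [Fintype κ] (Q : Matrix ι κ ℝ) (M : Matrix κ κ ℝ) (w : ι → ℝ) :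
    w ⬝ᵥ (Q * M * Qᵀ) *ᵥ w = (Qᵀ *ᵥ w) ⬝ᵥ M *ᵥ (Qᵀ *ᵥ w) := by
  rw [← mulVec_mulVec, ← mulVec_mulVec, dotProduct_mulVec, mulVec_transpose]

theorem isHermitian_transpose_mul_self (A : Matrix ι κ ℝ) : (Aᵀ * A).IsHermitian := by
  rw [← conjTranspose_eq_transpose_of_trivial]
  exact isHermitian_conjTranspose_mul_self A

theorem isIdempotentElem_mul_transpose [Fintype κ] [DecidableEq κ] {R : Type*} [CommSemiring R]
    {U : Matrix ι κ R} (hU : Uᵀ * U = 1) : IsIdempotentElem (U * Uᵀ) := by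
  rw [IsIdempotentElem, Matrix.mul_assoc, ← Matrix.mul_assoc Uᵀ, hU, Matrix.one_mul]

namespace IsHermitian

variable [DecidableEq ι] {A : Matrix ι ι ℝ}

theorem eigenvectorUnitary_mul_transpose (hA : A.IsHermitian) :
    (hA.eigenvectorUnitary : Matrix ι ι ℝ) * (hA.eigenvectorUnitary : Matrix ι ι ℝ)ᵀ = 1 := by
  simpa [star_eq_conjTranspose] using Unitary.coe_mul_star_self hA.eigenvectorUnitary

theorem transpose_eigenvectorUnitary_mul (hA : A.IsHermitian) :
    (hA.eigenvectorUnitary : Matrix ι ι ℝ)ᵀ * (hA.eigenvectorUnitary : Matrix ι ι ℝ) = 1 := by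
  simpa [star_eq_conjTranspose] using Unitary.coe_star_mul_self hA.eigenvectorUnitary

theorem eq_eigenvectorUnitary_mul_diagonal_mul_transpose (hA : A.IsHermitian) :
    A = (hA.eigenvectorUnitary : Matrix ι ι ℝ) * diagonal hA.eigenvalues *
      (hA.eigenvectorUnitary : Matrix ι ι ℝ)ᵀ := by
  conv_lhs => rw [hA.spectral_theorem]
  simp [Unitary.conjStarAlgAut_apply, star_eq_conjTranspose]

theorem transpose_eigenvectorUnitary_mul_mul (hA : A.IsHermitian) :
    (hA.eigenvectorUnitary : Matrix ι ι ℝ)ᵀ * A * (hA.eigenvectorUnitary : Matrix ι ι ℝ) =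
      diagonal hA.eigenvalues := by
  set P := (hA.eigenvectorUnitary : Matrix ι ι ℝ)
  calc Pᵀ * A * P = (Pᵀ * P) * diagonal hA.eigenvalues * (Pᵀ * P) := by
        conv_lhs => rw [hA.eq_eigenvectorUnitary_mul_diagonal_mul_transpose]
        simp only [Matrix.mul_assoc]
        rfl
    _ = diagonal hA.eigenvalues := by
        rw [hA.transpose_eigenvectorUnitary_mul, Matrix.one_mul, Matrix.mul_one]

theorem dotProduct_mulVec_le {c : ℝ} (hA : A.IsHermitian) (hc : ∀ i, hA.eigenvalues i ≤ c)
    (w : ι → ℝ) : w ⬝ᵥ A *ᵥ w ≤ c * (w ⬝ᵥ w) := by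
  set P := (hA.eigenvectorUnitary : Matrix ι ι ℝ)
  set x := Pᵀ *ᵥ w
  have hw : w ⬝ᵥ w = x ⬝ᵥ x :=
    calc w ⬝ᵥ w = w ⬝ᵥ (P * 1 * Pᵀ) *ᵥ w := by
          rw [Matrix.mul_one, hA.eigenvectorUnitary_mul_transpose, one_mulVec]
      _ = x ⬝ᵥ x := by rw [dotProduct_mul_mul_transpose_mulVec, one_mulVec]
  rw [hw, hA.eq_eigenvectorUnitary_mul_diagonal_mul_transpose,
    dotProduct_mul_mul_transpose_mulVec, dotProduct, dotProduct, Finset.mul_sum]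
  refine Finset.sum_le_sum fun i _ => ?_
  rw [mulVec_diagonal]
  nlinarith [hc i, mul_self_nonneg (x i)]

end IsHermitian

end Matrix

namespace MC

section InnerProduct

variable {m n : ℕ}

theorem ip_eq_trace (A B : Matrix (Fin m) (Fin n) ℝ) : ip A B = (Aᵀ * B).trace := by
  simp only [ip, Matrix.trace, Matrix.diag, Matrix.mul_apply, Matrix.transpose_apply]
  rw [Finset.sum_comm]

theorem ip_eq_vec_dotProduct_vec (A B : Matrix (Fin m) (Fin n) ℝ) : ip A B = vec A ⬝ᵥ vec B := by
  rw [ip_eq_trace, vec_dotProduct_vec]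

theorem ip_eq_sum_dotProduct (A B : Matrix (Fin m) (Fin n) ℝ) :
    ip A B = ∑ j, Aᵀ j ⬝ᵥ Bᵀ j := by
  rw [ip, Finset.sum_comm]
  rfl

theorem ip_comm (A B : Matrix (Fin m) (Fin n) ℝ) : ip A B = ip B A := by
  simp only [ip, mul_comm]

theorem ip_zero_left (B : Matrix (Fin m) (Fin n) ℝ) : ip 0 B = 0 := by
  simp [ip]

theorem ip_add_left (A B C : Matrix (Fin m) (Fin n) ℝ) : ip (A + B) C = ip A C + ip B C := by
  simp only [ip_eq_vec_dotProduct_vec, vec_add, add_dotProduct]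

theorem ip_add_right (A B C : Matrix (Fin m) (Fin n) ℝ) : ip A (B + C) = ip A B + ip A C := by
  simp only [ip_eq_vec_dotProduct_vec, vec_add, dotProduct_add]

theorem ip_sub_right (A B C : Matrix (Fin m) (Fin n) ℝ) : ip A (B - C) = ip A B - ip A C := by
  simp only [ip_eq_vec_dotProduct_vec, vec_sub, dotProduct_sub]

theorem ip_neg_left (A B : Matrix (Fin m) (Fin n) ℝ) : ip (-A) B = -ip A B := by
  simp only [ip_eq_vec_dotProduct_vec, vec_neg, neg_dotProduct]

theorem ip_neg_neg (A B : Matrix (Fin m) (Fin n) ℝ) : ip (-A) (-B) = ip A B := by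
  simp only [ip_eq_vec_dotProduct_vec, vec_neg, neg_dotProduct, dotProduct_neg, neg_neg]

theorem ip_mul_left {k : ℕ} (C : Matrix (Fin m) (Fin k) ℝ) (A : Matrix (Fin k) (Fin n) ℝ)
    (B : Matrix (Fin m) (Fin n) ℝ) : ip (C * A) B = ip A (Cᵀ * B) := by
  rw [ip_eq_trace, ip_eq_trace, Matrix.transpose_mul, Matrix.mul_assoc]

theorem ip_mul_right {k : ℕ} (C : Matrix (Fin k) (Fin n) ℝ) (A : Matrix (Fin m) (Fin k) ℝ)
    (B : Matrix (Fin m) (Fin n) ℝ) : ip (A * C) B = ip A (B * Cᵀ) := by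
  rw [ip_eq_trace, ip_eq_trace, Matrix.transpose_mul, Matrix.trace_mul_cycle Cᵀ Aᵀ B,
    Matrix.trace_mul_comm]

theorem abs_ip_le_fro_mul_fro (A B : Matrix (Fin m) (Fin n) ℝ) : |ip A B| ≤ fro A * fro B := by
  simp only [fro, ip_eq_vec_dotProduct_vec]
  exact abs_dotProduct_le_sqrt_mul_sqrt _ _

theorem fro_sub_comm (A B : Matrix (Fin m) (Fin n) ℝ) : fro (A - B) = fro (B - A) := by
  rw [fro, ← neg_sub, ip_neg_neg, fro]

end InnerProduct

section Projection

variable {m n r : ℕ} (U : Matrix (Fin m) (Fin r) ℝ) (V : Matrix (Fin n) (Fin r) ℝ)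

theorem PT_add_PTperp (Z : Matrix (Fin m) (Fin n) ℝ) : PT U V Z + PTperp U V Z = Z := by
  simp only [PT, PTperp, Matrix.sub_mul, Matrix.mul_sub, Matrix.one_mul, Matrix.mul_one,
    Matrix.mul_assoc]
  abel

theorem PT_sub (A B : Matrix (Fin m) (Fin n) ℝ) : PT U V (A - B) = PT U V A - PT U V B := by
  simp only [PT, Matrix.mul_sub, Matrix.sub_mul]
  abel

theorem PTperp_sub (A B : Matrix (Fin m) (Fin n) ℝ) :
    PTperp U V (A - B) = PTperp U V A - PTperp U V B := by
  simp only [PTperp, Matrix.mul_sub, Matrix.sub_mul]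
  abel

theorem PT_eq_self_iff (Z : Matrix (Fin m) (Fin n) ℝ) : PT U V Z = Z ↔ PTperp U V Z = 0 := by
  rw [eq_sub_of_add_eq' (PT_add_PTperp U V Z), sub_eq_zero, eq_comm]

theorem ip_PTperp_left (A B : Matrix (Fin m) (Fin n) ℝ) :
    ip (PTperp U V A) B = ip A (PTperp U V B) := by
  have hsymm : ∀ {k} (W : Matrix (Fin k) (Fin r) ℝ), (1 - W * Wᵀ)ᵀ = 1 - W * Wᵀ := fun W => by
    rw [Matrix.transpose_sub, Matrix.transpose_one, Matrix.transpose_mul, Matrix.transpose_transpose]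
  rw [PTperp, PTperp, ip_mul_right, hsymm, ip_mul_left, hsymm, Matrix.mul_assoc]

theorem PTperp_PTperp (hUo : Uᵀ * U = 1) (hVo : Vᵀ * V = 1) (Z : Matrix (Fin m) (Fin n) ℝ) :
    PTperp U V (PTperp U V Z) = PTperp U V Z := by
  have hU := (isIdempotentElem_mul_transpose hUo).one_sub
  have hV := (isIdempotentElem_mul_transpose hVo).one_sub
  simp only [PTperp, ← Matrix.mul_assoc, hU.eq]
  rw [Matrix.mul_assoc _ _ (1 - V * Vᵀ), hV.eq]

theorem PTperp_PT (hUo : Uᵀ * U = 1) (hVo : Vᵀ * V = 1) (Z : Matrix (Fin m) (Fin n) ℝ) :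
    PTperp U V (PT U V Z) = 0 := by
  rw [eq_sub_of_add_eq (PT_add_PTperp U V Z), PTperp_sub, PTperp_PTperp U V hUo hVo, sub_self]

theorem PTperp_mul_transpose (hUo : Uᵀ * U = 1) : PTperp U V (U * Vᵀ) = 0 := by
  rw [PTperp, Matrix.sub_mul, Matrix.one_mul, Matrix.mul_assoc U, ← Matrix.mul_assoc Uᵀ, hUo,
    Matrix.one_mul, sub_self, Matrix.zero_mul]

theorem ip_eq_ip_PT_add_ip_PTperp (hUo : Uᵀ * U = 1) (hVo : Vᵀ * V = 1)
    (A B : Matrix (Fin m) (Fin n) ℝ) :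
    ip A B = ip (PT U V A) (PT U V B) + ip (PTperp U V A) (PTperp U V B) := by
  have hcross : ∀ X Z, ip (PT U V X) (PTperp U V Z) = 0 := fun X Z => by
    rw [← ip_PTperp_left, PTperp_PT U V hUo hVo, ip_zero_left]
  conv_lhs => rw [← PT_add_PTperp U V A, ← PT_add_PTperp U V B]
  rw [ip_add_left, ip_add_right, ip_add_right, hcross, ip_comm (PTperp U V A), hcross]
  ring

theorem ip_sub_mul_transpose_eq (hUo : Uᵀ * U = 1) (hVo : Vᵀ * V = 1)
    {Ar : Matrix (Fin m) (Fin n) ℝ} (hArT : PT U V Ar = Ar) (B Y : Matrix (Fin m) (Fin n) ℝ) :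
    ip (Ar - B) (U * Vᵀ) = ip (PT U V (Ar - B)) (U * Vᵀ - PT U V Y)
      + ip (PTperp U V B) (PTperp U V Y) + ip (Ar - B) Y := by
  have hsplit := ip_eq_ip_PT_add_ip_PTperp U V hUo hVo (Ar - B) (U * Vᵀ - Y)
  rw [PT_sub U V (U * Vᵀ), (PT_eq_self_iff U V _).2 (PTperp_mul_transpose U V hUo),
    PTperp_sub, PTperp_sub, (PT_eq_self_iff U V Ar).1 hArT, PTperp_mul_transpose U V hUo,
    zero_sub, zero_sub, ip_neg_neg, ip_sub_right] at hsplit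
  linarith

end Projection

section Duality

variable {m n : ℕ}

theorem specNorm_nonneg (A : Matrix (Fin m) (Fin n) ℝ) : 0 ≤ specNorm A :=
  Real.iSup_nonneg fun _ => Real.sqrt_nonneg _

theorem nuclearNorm_nonneg (A : Matrix (Fin m) (Fin n) ℝ) : 0 ≤ nuclearNorm A :=
  Finset.sum_nonneg fun _ _ => Real.sqrt_nonneg _

theorem eigenvalues_le_specNorm_sq (Z : Matrix (Fin m) (Fin n) ℝ) (j : Fin n) :
    (isHermitian_transpose_mul_self Z).eigenvalues j ≤ specNorm Z ^ 2 := by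
  have hsqrt : √((isHermitian_transpose_mul_self Z).eigenvalues j) ≤ specNorm Z :=
    le_ciSup (f := fun j => √((isHermitian_transpose_mul_self Z).eigenvalues j))
      (Set.finite_range _).bddAbove j
  rwa [Real.sqrt_le_iff, and_iff_right (specNorm_nonneg Z)] at hsqrt

theorem mulVec_dotProduct_mulVec_le (Z : Matrix (Fin m) (Fin n) ℝ) (w : Fin n → ℝ) :
    (Z *ᵥ w) ⬝ᵥ (Z *ᵥ w) ≤ specNorm Z ^ 2 * (w ⬝ᵥ w) := by
  rw [dotProduct_comm, dotProduct_mulVec, ← mulVec_transpose, dotProduct_comm, mulVec_mulVec]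
  exact (isHermitian_transpose_mul_self Z).dotProduct_mulVec_le
    (eigenvalues_le_specNorm_sq Z) w

theorem abs_ip_le_specNorm_mul_nuclearNorm (Z X : Matrix (Fin m) (Fin n) ℝ) :
    |ip Z X| ≤ specNorm Z * nuclearNorm X := by
  set hX := isHermitian_transpose_mul_self X
  set P := (hX.eigenvectorUnitary : Matrix (Fin n) (Fin n) ℝ)
  have hrot : ip Z X = ∑ j, (Z * P)ᵀ j ⬝ᵥ (X * P)ᵀ j := by
    rw [← ip_eq_sum_dotProduct, ip_mul_right, Matrix.mul_assoc,
      hX.eigenvectorUnitary_mul_transpose, Matrix.mul_one]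
  have hX_col : ∀ j, (X * P)ᵀ j ⬝ᵥ (X * P)ᵀ j = hX.eigenvalues j := fun j => by
    rw [transpose_apply_dotProduct_self, Matrix.transpose_mul, Matrix.mul_assoc,
      ← Matrix.mul_assoc Xᵀ, ← Matrix.mul_assoc, hX.transpose_eigenvectorUnitary_mul_mul,
      diagonal_apply_eq]
  have hZ_col : ∀ j, √((Z * P)ᵀ j ⬝ᵥ (Z * P)ᵀ j) ≤ specNorm Z := fun j => by
    have hunit : Pᵀ j ⬝ᵥ Pᵀ j = 1 := by
      rw [transpose_apply_dotProduct_self, hX.transpose_eigenvectorUnitary_mul, one_apply_eq]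
    have h := mulVec_dotProduct_mulVec_le Z (Pᵀ j)
    rw [hunit, mul_one] at h
    exact Real.sqrt_le_iff.2 ⟨specNorm_nonneg Z, h⟩
  calc |ip Z X| ≤ ∑ j, |(Z * P)ᵀ j ⬝ᵥ (X * P)ᵀ j| := hrot ▸ Finset.abs_sum_le_sum_abs _ _
    _ ≤ ∑ j, √((Z * P)ᵀ j ⬝ᵥ (Z * P)ᵀ j) * √((X * P)ᵀ j ⬝ᵥ (X * P)ᵀ j) :=
        Finset.sum_le_sum fun j _ => abs_dotProduct_le_sqrt_mul_sqrt _ _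
    _ ≤ ∑ j, specNorm Z * √(hX.eigenvalues j) := by
        refine Finset.sum_le_sum fun j _ => ?_
        rw [hX_col]
        exact mul_le_mul_of_nonneg_right (hZ_col j) (Real.sqrt_nonneg _)
    _ = specNorm Z * nuclearNorm X := by rw [← Finset.mul_sum]; rfl

end Duality

theorem stmt5_general (m n r s : ℕ)
    (U : Matrix (Fin m) (Fin r) ℝ) (V : Matrix (Fin n) (Fin r) ℝ)
    (hUo : Uᵀ * U = 1) (hVo : Vᵀ * V = 1)
    (Ω : Multiset (Fin m × Fin n))
    (Ar : Matrix (Fin m) (Fin n) ℝ) (hArT : PT U V Ar = Ar)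
    (B : Matrix (Fin m) (Fin n) ℝ)
    (Y : Matrix (Fin m) (Fin n) ℝ)
    (hY1 : fro (PT U V Y - U * Vᵀ) ≤ Real.sqrt (r / (2 * n)))
    (hY2 : specNorm (PTperp U V Y) ≤ 1 / 2)
    (hY3 : ∀ M : Matrix (Fin m) (Fin n) ℝ,
        |ip Y M| ≤ Real.sqrt (3 * m * n * r * Real.log (2 * n) / (8 * s)) *
          Real.sqrt (ip (RΩ Ω M) M)) :
    ip (B - Ar) (U * Vᵀ)
      ≥ -(Real.sqrt (r / (2 * n)) * fro (PT U V (Ar - B)))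
        - (1 / 2) * nuclearNorm (PTperp U V B)
        - Real.sqrt (3 * m * n * r * Real.log (2 * n) / (8 * s)) *
            Real.sqrt (ip (RΩ Ω (Ar - B)) (Ar - B)) := by
  have hT : ip (PT U V (Ar - B)) (U * Vᵀ - PT U V Y)
      ≤ Real.sqrt (r / (2 * n)) * fro (PT U V (Ar - B)) :=
    calc _ ≤ fro (PT U V (Ar - B)) * fro (PT U V Y - U * Vᵀ) := by
          rw [fro_sub_comm]; exact (le_abs_self _).trans (abs_ip_le_fro_mul_fro _ _)
      _ ≤ Real.sqrt (r / (2 * n)) * fro (PT U V (Ar - B)) := by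
          rw [mul_comm]; exact mul_le_mul_of_nonneg_right hY1 (Real.sqrt_nonneg _)
  have hTperp : ip (PTperp U V B) (PTperp U V Y) ≤ 1 / 2 * nuclearNorm (PTperp U V B) :=
    calc _ ≤ specNorm (PTperp U V Y) * nuclearNorm (PTperp U V B) := by
          rw [ip_comm]; exact (le_abs_self _).trans (abs_ip_le_specNorm_mul_nuclearNorm _ _)
      _ ≤ 1 / 2 * nuclearNorm (PTperp U V B) :=
          mul_le_mul_of_nonneg_right hY2 (nuclearNorm_nonneg _)
  have hΩ := (le_abs_self _).trans (ip_comm Y (Ar - B) ▸ hY3 (Ar - B))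
  rw [ge_iff_le, ← neg_sub Ar B, ip_neg_left, ip_sub_mul_transpose_eq U V hUo hVo hArT B Y]
  linarith

/-- inequality (eqn:3): for any `B` and any `A_r` with
`P_T(A_r) = A_r`, given a dual certificate `Y` satisfying (i)–(iii),
`⟨B − A_r, UVᵀ⟩ ≥ −√(r/(2n))‖P_T(A_r − B)‖_F − (1/2)‖P_{T⊥}(B)‖_*
  − √(3mnr log(2n)/(8s))·√⟨R_Ω(A_r − B), A_r − B⟩`. -/
theorem stmt5 (m n r s : ℕ) (hm : 0 < m) (hmn : m ≤ n)
    (U : Matrix (Fin m) (Fin r) ℝ) (V : Matrix (Fin n) (Fin r) ℝ)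
    (hUo : Uᵀ * U = 1) (hVo : Vᵀ * V = 1)
    (Ω : Multiset (Fin m × Fin n)) (hcard : Ω.card = s)
    (Ar : Matrix (Fin m) (Fin n) ℝ) (hArT : PT U V Ar = Ar)
    (B : Matrix (Fin m) (Fin n) ℝ)
    (Y : Matrix (Fin m) (Fin n) ℝ)
    (hY1 : fro (PT U V Y - U * Vᵀ) ≤ Real.sqrt (r / (2 * n)))
    (hY2 : specNorm (PTperp U V Y) ≤ 1 / 2)
    (hY3 : ∀ M : Matrix (Fin m) (Fin n) ℝ,
        |ip Y M| ≤ Real.sqrt (3 * m * n * r * Real.log (2 * n) / (8 * s)) *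
          Real.sqrt (ip (RΩ Ω M) M)) :
    ip (B - Ar) (U * Vᵀ)
      ≥ -(Real.sqrt (r / (2 * n)) * fro (PT U V (Ar - B)))
        - (1 / 2) * nuclearNorm (PTperp U V B)
        - Real.sqrt (3 * m * n * r * Real.log (2 * n) / (8 * s)) *
            Real.sqrt (ip (RΩ Ω (Ar - B)) (Ar - B)) :=
  stmt5_general m n r s U V hUo hVo Ω Ar hArT B Y hY1 hY2 hY3

end MC
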